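/- arXiv:2509.08169 — 3 statements merged into one kernel-verified Lean document; each statement's English description precedes it below -/
import Mathlib

section
/- Let E be a finite-dimensional real normed vector space, let N : E → E, and let y : [t, t+τ] → E be twice continuously differentiable with y'(s) = N(y(s)) for all s ∈ [t, t+τ] and ‖y''(s)‖ ≤ M for all s ∈ [t, t+τ], where τ > 0. Suppose u ∈ E satisfies ‖u − N(y(t))‖ ≤ M_s·τ and ỹ ∈ E satisfies ‖ỹ − (y(t) + τ·u)‖ ≤ M_r·τ². Then ‖y(t+τ) − ỹ‖ ≤ (M/2 + M_s + M_r)·τ². (This is the order-one local truncation error of the rank-adaptive forward Euler step Y_{j+1} = 𝔗_{r_j}(Y_j + τ 𝔗_{s_j}(N(Y_j))) under the truncation-rank selection bounds.) -/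
/-! The exact solution differs from its own Euler step `y t + τ • y' t` by the Taylor remainder,
of size at most `M τ² / 2` since `‖y''‖ ≤ M`. Replacing `y' t = N (y t)` by `u` costs
`τ ‖u - N (y t)‖ ≤ Ms τ²`, and the final truncation costs at most `Mr τ²`. -/

section TaylorRemainder

variable {E : Type*} [NormedAddCommGroup E] [NormedSpace ℝ E]
  {f f' f'' : ℝ → E} {a b M : ℝ}

theorem norm_deriv_sub_deriv_left_le
    (hf' : ∀ s ∈ Set.Icc a b, HasDerivAt f' (f'' s) s)
    (hM : ∀ s ∈ Set.Icc a b, ‖f'' s‖ ≤ M) {s : ℝ} (hs : s ∈ Set.Icc a b) :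
    ‖f' s - f' a‖ ≤ M * (s - a) := by
  have ha : a ∈ Set.Icc a b := ⟨le_rfl, hs.1.trans hs.2⟩
  have := (convex_Icc a b).norm_image_sub_le_of_norm_hasDerivWithin_le
    (fun x hx => (hf' x hx).hasDerivWithinAt) hM ha hs
  rwa [Real.norm_of_nonneg (sub_nonneg.2 hs.1)] at this

theorem norm_sub_sub_smul_deriv_le_of_norm_deriv2_le (hab : a ≤ b)
    (hf : ∀ s ∈ Set.Icc a b, HasDerivAt f (f' s) s)
    (hf' : ∀ s ∈ Set.Icc a b, HasDerivAt f' (f'' s) s)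
    (hM : ∀ s ∈ Set.Icc a b, ‖f'' s‖ ≤ M) :
    ‖f b - f a - (b - a) • f' a‖ ≤ M / 2 * (b - a) ^ 2 := by
  set g : ℝ → E := fun s => f s - f a - (s - a) • f' a
  have hg : ∀ s ∈ Set.Icc a b, HasDerivAt g (f' s - f' a) s := fun s hs =>
    (((hf s hs).sub_const (f a)).sub (((hasDerivAt_id s).sub_const a).smul_const (f' a))).congr_deriv
      (by rw [one_smul])
  have hB : ∀ s, HasDerivAt (fun s => M / 2 * (s - a) ^ 2) (M * (s - a)) s := fun s =>
    ((((hasDerivAt_id' s).sub_const a).pow 2).const_mul (M / 2)).congr_deriv (by ring)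
  refine image_norm_le_of_norm_deriv_right_le_deriv_boundary'
    (fun s hs => (hg s hs).continuousAt.continuousWithinAt)
    (fun s hs => (hg s (Set.mem_Icc_of_Ico hs)).hasDerivWithinAt)
    (by simp [g]) (fun s _ => (hB s).continuousAt.continuousWithinAt)
    (fun s _ => (hB s).hasDerivWithinAt)
    (fun s hs => norm_deriv_sub_deriv_left_le hf' hM (Set.mem_Icc_of_Ico hs)) ⟨hab, le_rfl⟩

end TaylorRemainder

theorem rank_adaptive_euler_local_truncation_error_general
    {E : Type*} [NormedAddCommGroup E] [NormedSpace ℝ E]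
    (N : E → E) (y y' y'' : ℝ → E) (t τ M Ms Mr : ℝ) (hτ : 0 < τ)
    (hy' : ∀ s ∈ Set.Icc t (t + τ), HasDerivAt y (y' s) s)
    (hy'' : ∀ s ∈ Set.Icc t (t + τ), HasDerivAt y' (y'' s) s)
    (hode : ∀ s ∈ Set.Icc t (t + τ), y' s = N (y s))
    (hM : ∀ s ∈ Set.Icc t (t + τ), ‖y'' s‖ ≤ M)
    (u ytil : E)
    (hu : ‖u - N (y t)‖ ≤ Ms * τ)
    (hytil : ‖ytil - (y t + τ • u)‖ ≤ Mr * τ ^ 2) :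
    ‖y (t + τ) - ytil‖ ≤ (M / 2 + Ms + Mr) * τ ^ 2 := by
  have ht : t ≤ t + τ := le_add_of_nonneg_right hτ.le
  have htaylor := norm_sub_sub_smul_deriv_le_of_norm_deriv2_le ht hy' hy'' hM
  rw [add_sub_cancel_left, hode t ⟨le_rfl, ht⟩] at htaylor
  have hsplit : y (t + τ) - ytil =
      (y (t + τ) - y t - τ • N (y t)) + τ • (N (y t) - u) + (y t + τ • u - ytil) := by
    module
  calc ‖y (t + τ) - ytil‖
      ≤ ‖y (t + τ) - y t - τ • N (y t)‖ + ‖τ • (N (y t) - u)‖ + ‖y t + τ • u - ytil‖ := by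
        rw [hsplit]; exact norm_add₃_le
    _ ≤ M / 2 * τ ^ 2 + τ * (Ms * τ) + Mr * τ ^ 2 := by
        rw [norm_smul, Real.norm_of_nonneg hτ.le, norm_sub_rev (N _), norm_sub_rev (y t + _)]
        gcongr
    _ = (M / 2 + Ms + Mr) * τ ^ 2 := by ring

/-- Local truncation error (order one) of the rank-adaptive forward Euler step
`Y_{j+1} = 𝔗_{r_j}(Y_j + τ 𝔗_{s_j}(N(Y_j)))` under the truncation-rank selection bounds. -/
theorem rank_adaptive_euler_local_truncation_error
    {E : Type*} [NormedAddCommGroup E] [NormedSpace ℝ E] [FiniteDimensional ℝ E]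
    (N : E → E) (y y' y'' : ℝ → E) (t τ M Ms Mr : ℝ) (hτ : 0 < τ)
    (hy' : ∀ s ∈ Set.Icc t (t + τ), HasDerivAt y (y' s) s)
    (hy'' : ∀ s ∈ Set.Icc t (t + τ), HasDerivAt y' (y'' s) s)
    (hy''cont : ContinuousOn y'' (Set.Icc t (t + τ)))
    (hode : ∀ s ∈ Set.Icc t (t + τ), y' s = N (y s))
    (hM : ∀ s ∈ Set.Icc t (t + τ), ‖y'' s‖ ≤ M)
    (u ytil : E)
    (hu : ‖u - N (y t)‖ ≤ Ms * τ)
    (hytil : ‖ytil - (y t + τ • u)‖ ≤ Mr * τ ^ 2) :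
    ‖y (t + τ) - ytil‖ ≤ (M / 2 + Ms + Mr) * τ ^ 2 :=
  rank_adaptive_euler_local_truncation_error_general N y y' y'' t τ M Ms Mr hτ hy' hy'' hode hM u
    ytil hu hytil
end

section
/- Let E be a finite-dimensional real normed vector space, N : E → E Lipschitz continuous with constant L > 0, and let y : [0, T] → E be twice continuously differentiable with y'(t) = N(y(t)) for all t ∈ [0, T] and ‖y''(t)‖ ≤ M on [0, T]. Fix a positive integer N̄, set τ = T/N̄, and let (Y_j)_{0 ≤ j ≤ N̄} be any sequence in E with Y₀ = y(0) such that for each j there exists u_j ∈ E with ‖u_j − N(Y_j)‖ ≤ M_s·τ and ‖Y_{j+1} − (Y_j + τ·u_j)‖ ≤ M_r·τ². Then for all 0 ≤ j ≤ N̄, ‖Y_j − y(jτ)‖ ≤ ((M/2 + M_s + M_r)/L)·(e^{L·jτ} − 1)·τ. In particular the rank-adaptive forward Euler scheme converges with global order one. -/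
/-!
Along the exact solution, Taylor's formula with the bound `‖y''‖ ≤ M` gives
`y(t + τ) = y(t) + τ N(y(t)) + O(M τ² / 2)`. Comparing this with one perturbed Euler step,
the Lipschitz bound on `N` and the two truncation bounds show that the error
`e_j = ‖Y_j - y(jτ)‖` obeys `e_{j+1} ≤ (1 + Lτ) e_j + C τ²` with `C = M/2 + M_s + M_r`.
Summing the geometric recursion from `e_0 = 0` gives `e_j ≤ (C/L)((1 + Lτ)^j - 1) τ`,
and `1 + Lτ ≤ exp(Lτ)`.
-/

open Set Real

section NormedSpace

variable {E : Type*} [NormedAddCommGroup E] [NormedSpace ℝ E]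

theorem norm_sub_sub_smul_deriv_le {f f' f'' : ℝ → E} {a b M : ℝ} (hab : a ≤ b)
    (hf : ∀ t ∈ Icc a b, HasDerivAt f (f' t) t)
    (hf' : ∀ t ∈ Icc a b, HasDerivAt f' (f'' t) t)
    (hM : ∀ t ∈ Icc a b, ‖f'' t‖ ≤ M) :
    ‖f b - f a - (b - a) • f' a‖ ≤ M / 2 * (b - a) ^ 2 := by
  have hderiv : ∀ t ∈ Icc a b,
      HasDerivAt (fun s => f s - f a - (s - a) • f' a) (f' t - f' a) t := fun t ht => by
    simpa using ((hf t ht).sub_const (f a)).fun_sub (((hasDerivAt_id t).sub_const a).smul_const (f' a))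
  have hderiv_le : ∀ t ∈ Icc a b, ‖f' t - f' a‖ ≤ M * (t - a) :=
    norm_image_sub_le_of_norm_deriv_le_segment' (fun t ht => (hf' t ht).hasDerivWithinAt)
      (fun t ht => hM t (Ico_subset_Icc_self ht))
  have hbound : ∀ t, HasDerivAt (fun s => M / 2 * (s - a) ^ 2) (M * (t - a)) t := fun t => by
    refine ((((hasDerivAt_id t).sub_const a).pow 2).const_mul (M / 2)).congr_deriv ?_
    simp only [id, Nat.cast_ofNat]
    ring
  exact image_norm_le_of_norm_deriv_right_le_deriv_boundary
    (fun t ht => (hderiv t ht).continuousAt.continuousWithinAt)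
    (fun t ht => (hderiv t (Ico_subset_Icc_self ht)).hasDerivWithinAt) (by simp) hbound
    (fun t ht => hderiv_le t (Ico_subset_Icc_self ht)) (right_mem_Icc.2 hab)

theorem norm_perturbed_euler_step_sub_le {N : E → E} {L τ Ms Mr K : ℝ}
    (hLip : ∀ a b : E, ‖N a - N b‖ ≤ L * ‖a - b‖) (hτ : 0 ≤ τ) {Y Y₁ u z z₁ : E}
    (hu : ‖u - N Y‖ ≤ Ms * τ) (hY₁ : ‖Y₁ - (Y + τ • u)‖ ≤ Mr * τ ^ 2)
    (hz₁ : ‖z₁ - z - τ • N z‖ ≤ K * τ ^ 2) :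
    ‖Y₁ - z₁‖ ≤ (1 + L * τ) * ‖Y - z‖ + (K + Ms + Mr) * τ ^ 2 := calc
  ‖Y₁ - z₁‖ = ‖(Y₁ - (Y + τ • u)) + τ • (u - N Y) + τ • (N Y - N z) + (Y - z)
      - (z₁ - z - τ • N z)‖ := by
    congr 1
    simp only [smul_sub]
    abel
  _ ≤ ‖Y₁ - (Y + τ • u)‖ + ‖τ • (u - N Y)‖ + ‖τ • (N Y - N z)‖ + ‖Y - z‖
      + ‖z₁ - z - τ • N z‖ := norm_sub_le_of_le norm_add₄_le le_rfl
  _ ≤ Mr * τ ^ 2 + τ * (Ms * τ) + τ * (L * ‖Y - z‖) + ‖Y - z‖ + K * τ ^ 2 := by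
    rw [norm_smul, norm_smul, Real.norm_of_nonneg hτ]
    gcongr
    exact hLip _ _
  _ = (1 + L * τ) * ‖Y - z‖ + (K + Ms + Mr) * τ ^ 2 := by ring

end NormedSpace

section DiscreteGronwall

variable {e : ℕ → ℝ} {δ c : ℝ} {n : ℕ}

theorem le_div_mul_pow_sub_one_of_le_one_add_mul_add (hδ : 0 < δ) (he₀ : e 0 ≤ 0)
    (he : ∀ j < n, e (j + 1) ≤ (1 + δ) * e j + c) :
    ∀ j ≤ n, e j ≤ c / δ * ((1 + δ) ^ j - 1) := by
  intro j hj
  induction j with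
  | zero => simpa using he₀
  | succ j ih => calc
    e (j + 1) ≤ (1 + δ) * e j + c := he j hj
    _ ≤ (1 + δ) * (c / δ * ((1 + δ) ^ j - 1)) + c := by
      gcongr
      exact ih (by omega)
    _ = c / δ * ((1 + δ) ^ (j + 1) - 1) := by
      field_simp
      ring

theorem le_div_mul_exp_sub_one_of_le_one_add_mul_add (hδ : 0 < δ) (hc : 0 ≤ c)
    (he₀ : e 0 ≤ 0) (he : ∀ j < n, e (j + 1) ≤ (1 + δ) * e j + c) :
    ∀ j ≤ n, e j ≤ c / δ * (exp (j * δ) - 1) := fun j hj => calc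
  e j ≤ c / δ * ((1 + δ) ^ j - 1) := le_div_mul_pow_sub_one_of_le_one_add_mul_add hδ he₀ he j hj
  _ ≤ c / δ * (exp δ ^ j - 1) := by
    gcongr
    linarith [add_one_le_exp δ]
  _ = c / δ * (exp (j * δ) - 1) := by rw [← exp_nat_mul]

end DiscreteGronwall

theorem rank_adaptive_euler_global_convergence_general
    {E : Type*} [NormedAddCommGroup E] [NormedSpace ℝ E]
    (N : E → E) (L : ℝ) (hLpos : 0 < L)
    (hLip : ∀ a b : E, ‖N a - N b‖ ≤ L * ‖a - b‖)
    (y y' y'' : ℝ → E) (T M Ms Mr : ℝ) (hT : 0 < T)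
    (hy' : ∀ t ∈ Set.Icc (0 : ℝ) T, HasDerivAt y (y' t) t)
    (hy'' : ∀ t ∈ Set.Icc (0 : ℝ) T, HasDerivAt y' (y'' t) t)
    (hode : ∀ t ∈ Set.Icc (0 : ℝ) T, y' t = N (y t))
    (hM : ∀ t ∈ Set.Icc (0 : ℝ) T, ‖y'' t‖ ≤ M)
    (Nbar : ℕ) (hNbar : 0 < Nbar) (τ : ℝ) (hτ : τ = T / (Nbar : ℝ))
    (Y : ℕ → E) (hY0 : Y 0 = y 0)
    (hstep : ∀ j < Nbar, ∃ u : E,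
      ‖u - N (Y j)‖ ≤ Ms * τ ∧ ‖Y (j + 1) - (Y j + τ • u)‖ ≤ Mr * τ ^ 2) :
    ∀ j ≤ Nbar,
      ‖Y j - y ((j : ℝ) * τ)‖ ≤
        ((M / 2 + Ms + Mr) / L) * (Real.exp (L * ((j : ℝ) * τ)) - 1) * τ := by
  have hτ_pos : 0 < τ := hτ ▸ div_pos hT (Nat.cast_pos.2 hNbar)
  have hgrid : ∀ j ≤ Nbar, (j : ℝ) * τ ∈ Icc 0 T := fun j hj => by
    refine ⟨by positivity, ?_⟩
    calc (j : ℝ) * τ ≤ Nbar * τ := by gcongr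
      _ = T := by rw [hτ]; field_simp
  have hM₀ : 0 ≤ M := (norm_nonneg _).trans (hM 0 ⟨le_rfl, hT.le⟩)
  obtain ⟨_, hu₀, hY₁₀⟩ := hstep 0 hNbar
  have hMs : 0 ≤ Ms := nonneg_of_mul_nonneg_left ((norm_nonneg _).trans hu₀) hτ_pos
  have hMr : 0 ≤ Mr := nonneg_of_mul_nonneg_left ((norm_nonneg _).trans hY₁₀) (by positivity)
  have hlocal : ∀ j < Nbar, ‖Y (j + 1) - y ((j + 1 : ℕ) * τ)‖ ≤
      (1 + L * τ) * ‖Y j - y (j * τ)‖ + (M / 2 + Ms + Mr) * τ ^ 2 := fun j hj => by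
    obtain ⟨u, hu, hY₁⟩ := hstep j hj
    have hsub : Icc ((j : ℝ) * τ) ((j + 1 : ℕ) * τ) ⊆ Icc 0 T :=
      Icc_subset_Icc (hgrid j hj.le).1 (hgrid (j + 1) hj).2
    have htaylor := norm_sub_sub_smul_deriv_le (by gcongr; omega)
      (fun t ht => hy' t (hsub ht)) (fun t ht => hy'' t (hsub ht)) (fun t ht => hM t (hsub ht))
    rw [show ((j + 1 : ℕ) : ℝ) * τ - j * τ = τ by push_cast; ring, hode _ (hgrid j hj.le)]
      at htaylor
    exact norm_perturbed_euler_step_sub_le hLip hτ_pos.le hu hY₁ htaylor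
  intro j hj
  calc ‖Y j - y (j * τ)‖ ≤ (M / 2 + Ms + Mr) * τ ^ 2 / (L * τ) * (exp (j * (L * τ)) - 1) :=
        le_div_mul_exp_sub_one_of_le_one_add_mul_add (e := fun j => ‖Y j - y (j * τ)‖)
          (mul_pos hLpos hτ_pos) (by positivity) (by simp [hY0]) hlocal j hj
    _ = _ := by
      field_simp

/-- Global order-one convergence of the rank-adaptive forward Euler scheme
`Y_{j+1} = 𝔗_{r_j}(Y_j + τ 𝔗_{s_j}(N(Y_j)))`, where the truncated quantities are
abstracted as arbitrary elements `u_j` and `Y_{j+1}` satisfying the truncation bounds. -/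
theorem rank_adaptive_euler_global_convergence
    {E : Type*} [NormedAddCommGroup E] [NormedSpace ℝ E] [FiniteDimensional ℝ E]
    (N : E → E) (L : ℝ) (hLpos : 0 < L)
    (hLip : ∀ a b : E, ‖N a - N b‖ ≤ L * ‖a - b‖)
    (y y' y'' : ℝ → E) (T M Ms Mr : ℝ) (hT : 0 < T)
    (hy' : ∀ t ∈ Set.Icc (0 : ℝ) T, HasDerivAt y (y' t) t)
    (hy'' : ∀ t ∈ Set.Icc (0 : ℝ) T, HasDerivAt y' (y'' t) t)
    (hy''cont : ContinuousOn y'' (Set.Icc (0 : ℝ) T))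
    (hode : ∀ t ∈ Set.Icc (0 : ℝ) T, y' t = N (y t))
    (hM : ∀ t ∈ Set.Icc (0 : ℝ) T, ‖y'' t‖ ≤ M)
    (Nbar : ℕ) (hNbar : 0 < Nbar) (τ : ℝ) (hτ : τ = T / (Nbar : ℝ))
    (Y : ℕ → E) (hY0 : Y 0 = y 0)
    (hstep : ∀ j < Nbar, ∃ u : E,
      ‖u - N (Y j)‖ ≤ Ms * τ ∧ ‖Y (j + 1) - (Y j + τ • u)‖ ≤ Mr * τ ^ 2) :
    ∀ j ≤ Nbar,
      ‖Y j - y ((j : ℝ) * τ)‖ ≤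
        ((M / 2 + Ms + Mr) / L) * (Real.exp (L * ((j : ℝ) * τ)) - 1) * τ :=
  rank_adaptive_euler_global_convergence_general N L hLpos hLip y y' y'' T M Ms Mr hT hy' hy'' hode
    hM Nbar hNbar τ hτ Y hY0 hstep
end

section
/- Let E be a finite-dimensional real normed vector space, N : E → E Lipschitz continuous with constant L > 0, and let z : [0, T] → E be twice continuously differentiable with −z'(t) = N(z(t)) for all t ∈ [0, T] and ‖z''(t)‖ ≤ M on [0, T]. Fix a positive integer N̄, set τ = T/N̄ and t_j = jτ, and let (Z_j)_{0 ≤ j ≤ N̄} be any sequence in E with Z_{N̄} = z(T) such that for each j ∈ {N̄−1, …, 0} there exists u_j ∈ E with ‖u_j − N(Z_{j+1})‖ ≤ M_s·τ and ‖Z_j − (Z_{j+1} + τ·u_j)‖ ≤ M_r·τ². Then for all 0 ≤ j ≤ N̄, ‖Z_j − z(t_j)‖ ≤ ((M/2 + M_s + M_r)/L)·(e^{L·(T − t_j)} − 1)·τ; i.e. the rank-adaptive reverse-time Euler scheme converges with global order one. -/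
/-!
The global error `e j = ‖Z j - z (j * τ)‖` obeys `e j ≤ (1 + L τ) e (j + 1) + (M / 2 + Ms + Mr) τ²`:
the truncations contribute `Ms τ²` and `Mr τ²`, the Lipschitz bound propagates `e (j + 1)`, and
the local error of the exact solution is a second-order Taylor remainder at `t_{j+1}`, where
`N (z t) = -z' t`. Unrolling this backward recursion from `e N̄ = 0` and using `1 + Lτ ≤ exp (Lτ)`
gives the bound.
-/

open Set

theorem norm_sub_sub_add_smul_deriv_le {E : Type*} [NormedAddCommGroup E] [NormedSpace ℝ E]
    {z z' z'' : ℝ → E} {a b M : ℝ} (hab : a ≤ b)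
    (hz' : ∀ t ∈ Icc a b, HasDerivAt z (z' t) t)
    (hz'' : ∀ t ∈ Icc a b, HasDerivAt z' (z'' t) t)
    (hM : ∀ t ∈ Icc a b, ‖z'' t‖ ≤ M) :
    ‖z a - z b + (b - a) • z' b‖ ≤ M / 2 * (b - a) ^ 2 := by
  -- `r` vanishes at `a` and `‖r'‖ ≤ M (s - a)`, so it is fenced by `M / 2 * (s - a) ^ 2`.
  set r : ℝ → E := fun s ↦ z a - z s + (s - a) • z' s
  have hr : ∀ s ∈ Icc a b, HasDerivAt r ((s - a) • z'' s) s := fun s hs ↦ by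
    refine (((hz' s hs).const_sub (z a)).add
      (((hasDerivAt_id' s).sub_const a).smul (hz'' s hs))).congr_deriv ?_
    rw [one_smul]; abel
  have hB : ∀ s, HasDerivAt (fun s ↦ M / 2 * (s - a) ^ 2) (M * (s - a)) s := fun s ↦ by
    refine ((((hasDerivAt_id' s).sub_const a).pow 2).const_mul (M / 2)).congr_deriv ?_
    ring
  refine image_norm_le_of_norm_deriv_right_le_deriv_boundary
    (fun s hs ↦ (hr s hs).continuousAt.continuousWithinAt)
    (fun s hs ↦ (hr s (Ico_subset_Icc_self hs)).hasDerivWithinAt) (by simp [r]) hB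
    (fun s hs ↦ ?_) (right_mem_Icc.2 hab)
  rw [norm_smul, Real.norm_of_nonneg (sub_nonneg.2 hs.1), mul_comm]
  exact mul_le_mul_of_nonneg_right (hM s (Ico_subset_Icc_self hs)) (sub_nonneg.2 hs.1)

theorem norm_local_error_reverse_euler_le {E : Type*} [NormedAddCommGroup E]
    [NormedSpace ℝ E] {N : E → E} {z z' z'' : ℝ → E} {a b M : ℝ} (hab : a ≤ b)
    (hz' : ∀ t ∈ Icc a b, HasDerivAt z (z' t) t)
    (hz'' : ∀ t ∈ Icc a b, HasDerivAt z' (z'' t) t)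
    (hM : ∀ t ∈ Icc a b, ‖z'' t‖ ≤ M) (hode : -(z' b) = N (z b)) :
    ‖z a - (z b + (b - a) • N (z b))‖ ≤ M / 2 * (b - a) ^ 2 := by
  rw [← hode, smul_neg, ← sub_eq_add_neg, sub_sub_eq_add_sub, add_sub_right_comm]
  exact norm_sub_sub_add_smul_deriv_le hab hz' hz'' hM

theorem le_div_mul_pow_sub_one_of_le_one_add_mul_succ {e : ℕ → ℝ} {n : ℕ} {a b : ℝ}
    (ha : 0 < a) (hn : e n ≤ 0) (hstep : ∀ j < n, e j ≤ (1 + a) * e (j + 1) + b) :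
    ∀ j ≤ n, e j ≤ b / a * ((1 + a) ^ (n - j) - 1) := by
  intro j hj
  induction hj using Nat.decreasingInduction with
  | self => simpa using hn
  | of_succ j hj ih =>
    have hexp : n - j = n - (j + 1) + 1 := by omega
    calc e j ≤ (1 + a) * (b / a * ((1 + a) ^ (n - (j + 1)) - 1)) + b :=
          (hstep j hj).trans (by gcongr)
      _ = b / a * ((1 + a) ^ (n - j) - 1) := by
          rw [hexp]; field_simp; ring

theorem le_div_mul_exp_sub_one_of_le_one_add_mul_succ {e : ℕ → ℝ} {n : ℕ} {a b : ℝ}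
    (ha : 0 < a) (hb : 0 ≤ b) (hn : e n ≤ 0) (hstep : ∀ j < n, e j ≤ (1 + a) * e (j + 1) + b) :
    ∀ j ≤ n, e j ≤ b / a * (Real.exp (a * (n - j)) - 1) := by
  intro j hj
  calc e j ≤ b / a * ((1 + a) ^ (n - j) - 1) :=
        le_div_mul_pow_sub_one_of_le_one_add_mul_succ ha hn hstep j hj
    _ ≤ b / a * (Real.exp a ^ (n - j) - 1) := by
        gcongr
        linarith [Real.add_one_le_exp a]
    _ = b / a * (Real.exp (a * (n - j)) - 1) := by
        rw [← Real.exp_nat_mul, Nat.cast_sub hj, mul_comm _ a]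

theorem norm_sub_le_of_perturbed_euler_step {E : Type*} [NormedAddCommGroup E]
    [NormedSpace ℝ E] {N : E → E} {L τ Ms Mr K : ℝ} {Z₀ Z₁ u z₀ z₁ : E} (hτ : 0 ≤ τ)
    (hLip : ‖N Z₁ - N z₁‖ ≤ L * ‖Z₁ - z₁‖) (hu : ‖u - N Z₁‖ ≤ Ms * τ)
    (hZ : ‖Z₀ - (Z₁ + τ • u)‖ ≤ Mr * τ ^ 2) (hz : ‖z₀ - (z₁ + τ • N z₁)‖ ≤ K * τ ^ 2) :
    ‖Z₀ - z₀‖ ≤ (1 + L * τ) * ‖Z₁ - z₁‖ + (K + Ms + Mr) * τ ^ 2 := by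
  have hsplit : Z₀ - z₀ = (Z₀ - (Z₁ + τ • u)) + τ • (u - N Z₁) + τ • (N Z₁ - N z₁)
      + (Z₁ - z₁) - (z₀ - (z₁ + τ • N z₁)) := by
    simp only [smul_sub]; abel
  calc ‖Z₀ - z₀‖ ≤ ‖Z₀ - (Z₁ + τ • u)‖ + ‖τ • (u - N Z₁)‖ + ‖τ • (N Z₁ - N z₁)‖
        + ‖Z₁ - z₁‖ + ‖z₀ - (z₁ + τ • N z₁)‖ :=
        hsplit ▸ (norm_sub_le _ _).trans (add_le_add_left norm_add₄_le _)
    _ ≤ Mr * τ ^ 2 + τ * (Ms * τ) + τ * (L * ‖Z₁ - z₁‖) + ‖Z₁ - z₁‖ + K * τ ^ 2 := by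
        rw [norm_smul, norm_smul, Real.norm_of_nonneg hτ]
        gcongr
    _ = (1 + L * τ) * ‖Z₁ - z₁‖ + (K + Ms + Mr) * τ ^ 2 := by ring

theorem rank_adaptive_reverse_euler_global_convergence_general
    {E : Type*} [NormedAddCommGroup E] [NormedSpace ℝ E]
    (N : E → E) (L : ℝ) (hLpos : 0 < L)
    (hLip : ∀ a b : E, ‖N a - N b‖ ≤ L * ‖a - b‖)
    (z z' z'' : ℝ → E) (T M Ms Mr : ℝ) (hT : 0 < T)
    (hz' : ∀ t ∈ Set.Icc (0 : ℝ) T, HasDerivAt z (z' t) t)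
    (hz'' : ∀ t ∈ Set.Icc (0 : ℝ) T, HasDerivAt z' (z'' t) t)
    (hode : ∀ t ∈ Set.Icc (0 : ℝ) T, -(z' t) = N (z t))
    (hM : ∀ t ∈ Set.Icc (0 : ℝ) T, ‖z'' t‖ ≤ M)
    (Nbar : ℕ) (hNbar : 0 < Nbar) (τ : ℝ) (hτ : τ = T / (Nbar : ℝ))
    (Z : ℕ → E) (hZT : Z Nbar = z T)
    (hstep : ∀ j < Nbar, ∃ u : E,
      ‖u - N (Z (j + 1))‖ ≤ Ms * τ ∧ ‖Z j - (Z (j + 1) + τ • u)‖ ≤ Mr * τ ^ 2) :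
    ∀ j ≤ Nbar,
      ‖Z j - z ((j : ℝ) * τ)‖ ≤
        ((M / 2 + Ms + Mr) / L) * (Real.exp (L * (T - (j : ℝ) * τ)) - 1) * τ := by
  have hτpos : 0 < τ := hτ ▸ div_pos hT (Nat.cast_pos.2 hNbar)
  have hT_eq : (Nbar : ℝ) * τ = T := by rw [hτ]; field_simp
  have hgrid : ∀ j ≤ Nbar, (j : ℝ) * τ ∈ Icc 0 T := fun j hj ↦
    ⟨by positivity, hT_eq ▸ mul_le_mul_of_nonneg_right (Nat.cast_le.2 hj) hτpos.le⟩
  have hC : 0 ≤ M / 2 + Ms + Mr := by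
    obtain ⟨u, hu, hZ⟩ := hstep 0 hNbar
    have hM0 := (norm_nonneg _).trans (hM 0 (left_mem_Icc.2 hT.le))
    have hMs := (mul_nonneg_iff_of_pos_right hτpos).1 ((norm_nonneg _).trans hu)
    have hMr := (mul_nonneg_iff_of_pos_right (pow_pos hτpos 2)).1 ((norm_nonneg _).trans hZ)
    positivity
  have hlocal : ∀ j < Nbar, ‖z (j * τ) - (z ((j + 1 : ℕ) * τ) + τ • N (z ((j + 1 : ℕ) * τ)))‖
      ≤ M / 2 * τ ^ 2 := fun j hj ↦ by
    have hlen : ((j + 1 : ℕ) : ℝ) * τ - j * τ = τ := by push_cast; ring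
    have hsub : Icc (j * τ) ((j + 1 : ℕ) * τ) ⊆ Icc 0 T :=
      Icc_subset_Icc (hgrid j hj.le).1 (hgrid _ hj).2
    simpa only [hlen] using norm_local_error_reverse_euler_le (by linarith)
      (fun t ht ↦ hz' t (hsub ht)) (fun t ht ↦ hz'' t (hsub ht)) (fun t ht ↦ hM t (hsub ht))
      (hode _ (hgrid _ hj))
  intro j hj
  calc ‖Z j - z (j * τ)‖
      ≤ (M / 2 + Ms + Mr) * τ ^ 2 / (L * τ) * (Real.exp (L * τ * (Nbar - j)) - 1) := by
        refine le_div_mul_exp_sub_one_of_le_one_add_mul_succ (e := fun i ↦ ‖Z i - z (i * τ)‖)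
          (by positivity) (by positivity) (by simp [hT_eq, hZT]) (fun i hi ↦ ?_) j hj
        obtain ⟨u, hu, hZ⟩ := hstep i hi
        exact norm_sub_le_of_perturbed_euler_step hτpos.le (hLip _ _) hu hZ (hlocal i hi)
    _ = (M / 2 + Ms + Mr) / L * (Real.exp (L * (T - j * τ)) - 1) * τ := by
        rw [← hT_eq]; field_simp

/-- Global order-one convergence of the rank-adaptive reverse-time Euler scheme
`Z_j = 𝔗_{r_{j+1}}(Z_{j+1} + τ 𝔗_{s_{j+1}}(N(Z_{j+1})))` for the terminal value
problem `−dZ/dt = N(Z)`, `Z(T) = Z_T`; the truncated quantities are abstracted as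
arbitrary elements `u_j` and `Z_j` satisfying the truncation bounds. -/
theorem rank_adaptive_reverse_euler_global_convergence
    {E : Type*} [NormedAddCommGroup E] [NormedSpace ℝ E] [FiniteDimensional ℝ E]
    (N : E → E) (L : ℝ) (hLpos : 0 < L)
    (hLip : ∀ a b : E, ‖N a - N b‖ ≤ L * ‖a - b‖)
    (z z' z'' : ℝ → E) (T M Ms Mr : ℝ) (hT : 0 < T)
    (hz' : ∀ t ∈ Set.Icc (0 : ℝ) T, HasDerivAt z (z' t) t)
    (hz'' : ∀ t ∈ Set.Icc (0 : ℝ) T, HasDerivAt z' (z'' t) t)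
    (hz''cont : ContinuousOn z'' (Set.Icc (0 : ℝ) T))
    (hode : ∀ t ∈ Set.Icc (0 : ℝ) T, -(z' t) = N (z t))
    (hM : ∀ t ∈ Set.Icc (0 : ℝ) T, ‖z'' t‖ ≤ M)
    (Nbar : ℕ) (hNbar : 0 < Nbar) (τ : ℝ) (hτ : τ = T / (Nbar : ℝ))
    (Z : ℕ → E) (hZT : Z Nbar = z T)
    (hstep : ∀ j < Nbar, ∃ u : E,
      ‖u - N (Z (j + 1))‖ ≤ Ms * τ ∧ ‖Z j - (Z (j + 1) + τ • u)‖ ≤ Mr * τ ^ 2) :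
    ∀ j ≤ Nbar,
      ‖Z j - z ((j : ℝ) * τ)‖ ≤
        ((M / 2 + Ms + Mr) / L) * (Real.exp (L * (T - (j : ℝ) * τ)) - 1) * τ :=
  rank_adaptive_reverse_euler_global_convergence_general N L hLpos hLip z z' z'' T M Ms Mr hT hz'
    hz'' hode hM Nbar hNbar τ hτ Z hZT hstep
end
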